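/- arXiv:1108.3526 — 2 statements merged into one kernel-verified Lean document; each statement's English description precedes it below -/
import Mathlib

section
/- A ribbon graph G is orientable if and only if its partial dual G^A is orientable, for every subset A of E(G). -/
/-!
A combinatorial model of ribbon graphs (cellularly embedded graphs), following
the flag / three-involution (graph-encoded map) presentation.  A ribbon graph
consists of a finite set of flags `flags` inside an ambient type `F`, a finite
set `fverts` of tokens representing isolated (bare) vertices, and three
involutions `s0, s1, s2` of `F` supported on `flags`, with `s0` and `s2`
commuting.  Vertices correspond to orbits of `⟨s1, s2⟩` on flags (plus the bare
vertices), edges to orbits of `⟨s0, s2⟩`, and boundary components to orbits of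
`⟨s0, s1⟩`.  Chmutov's partial dual with respect to an edge subset `A` swaps
the roles of `s0` and `s2` on the flags of `A`.
-/

namespace RibbonPaper

open Function

variable {F : Type*} [DecidableEq F] [Fintype F]

structure RibbonGraph (F : Type*) [DecidableEq F] [Fintype F] where
  flags : Finset F
  fverts : Finset F
  disj : ∀ x ∈ fverts, x ∉ flags
  s0 : Equiv.Perm F
  s1 : Equiv.Perm F
  s2 : Equiv.Perm F
  fix0 : ∀ x ∉ flags, s0 x = x
  fix1 : ∀ x ∉ flags, s1 x = x
  fix2 : ∀ x ∉ flags, s2 x = x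
  inv0 : ∀ x, s0 (s0 x) = x
  inv1 : ∀ x, s1 (s1 x) = x
  inv2 : ∀ x, s2 (s2 x) = x
  comm02 : ∀ x, s0 (s2 x) = s2 (s0 x)

namespace RibbonGraph

attribute [local instance] Classical.propDecidable

/-- An involution supported on `S` preserves `S`. -/
lemma perm_mem_of {p : Equiv.Perm F} {S : Finset F}
    (hfix : ∀ x ∉ S, p x = x) (hinv : ∀ x, p (p x) = x)
    {x : F} (hx : x ∈ S) : p x ∈ S := by
  by_contra hc
  have h1 : p (p x) = p x := hfix _ hc
  rw [hinv x] at h1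
  exact hc (h1 ▸ hx)

/-- The function acting as `v` on `A` and as `u` off `A`. -/
def mixFun (u v : Equiv.Perm F) (A : Finset F) : F → F :=
  fun x => if x ∈ A then v x else u x

lemma involutive_mixFun {u v : Equiv.Perm F} {A : Finset F}
    (hu : ∀ x, u (u x) = x) (hv : ∀ x, v (v x) = x)
    (hA : ∀ x ∈ A, u x ∈ A ∧ v x ∈ A) :
    Function.Involutive (mixFun u v A) := by
  intro x
  by_cases hx : x ∈ A
  · have h1 : v x ∈ A := (hA x hx).2
    simp only [mixFun, if_pos hx, if_pos h1]
    exact hv x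
  · have h1 : u x ∉ A := by
      intro hc
      have h2 : u (u x) ∈ A := (hA _ hc).1
      rw [hu x] at h2
      exact hx h2
    simp only [mixFun, if_neg hx, if_neg h1]
    exact hu x

/-- The permutation acting as `v` on `A` and as `u` off `A` (junk value `u`
if this fails to be an involution). -/
noncomputable def mix (u v : Equiv.Perm F) (A : Finset F) : Equiv.Perm F :=
  if h : Function.Involutive (mixFun u v A) then Function.Involutive.toPerm _ h else u

lemma mix_apply {u v : Equiv.Perm F} {A : Finset F}
    (h : Function.Involutive (mixFun u v A)) (x : F) :
    mix u v A x = mixFun u v A x := by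
  simp only [mix, dif_pos h]
  rfl

/-- `A` is (the set of flags of) a subset of the edge set `E(G)`:
it consists of flags and is a union of `⟨s0, s2⟩`-orbits, i.e. of edges. -/
def IsEdgeSubset (G : RibbonGraph F) (A : Finset F) : Prop :=
  A ⊆ G.flags ∧ ∀ x ∈ A, G.s0 x ∈ A ∧ G.s2 x ∈ A

/-- The partial dual `G^A` of `G` with respect to the edge subset `A`
(Chmutov): the involutions `s0` and `s2` are interchanged on the flags of the
edges of `A`.  (Junk value `G` if `A` is not a union of edges.) -/
noncomputable def partialDual (G : RibbonGraph F) (A : Finset F) : RibbonGraph F :=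
  if h : G.IsEdgeSubset A then
    have h02 : Function.Involutive (mixFun G.s0 G.s2 A) :=
      involutive_mixFun G.inv0 G.inv2 h.2
    have h20 : Function.Involutive (mixFun G.s2 G.s0 A) :=
      involutive_mixFun G.inv2 G.inv0 (fun x hx => ⟨(h.2 x hx).2, (h.2 x hx).1⟩)
    { flags := G.flags
      fverts := G.fverts
      disj := G.disj
      s0 := mix G.s0 G.s2 A
      s1 := G.s1
      s2 := mix G.s2 G.s0 A
      fix0 := by
        intro x hx
        have hxA : x ∉ A := fun hc => hx (h.1 hc)
        rw [mix_apply h02]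
        simp only [mixFun, if_neg hxA]
        exact G.fix0 x hx
      fix1 := G.fix1
      fix2 := by
        intro x hx
        have hxA : x ∉ A := fun hc => hx (h.1 hc)
        rw [mix_apply h20]
        simp only [mixFun, if_neg hxA]
        exact G.fix2 x hx
      inv0 := by
        intro x
        rw [mix_apply h02, mix_apply h02]
        exact h02 x
      inv1 := G.inv1
      inv2 := by
        intro x
        rw [mix_apply h20, mix_apply h20]
        exact h20 x
      comm02 := by
        intro x
        simp only [mix_apply h02, mix_apply h20]
        by_cases hx : x ∈ A
        · have h0 : G.s0 x ∈ A := (h.2 x hx).1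
          have h2 : G.s2 x ∈ A := (h.2 x hx).2
          simp only [mixFun, if_pos hx, if_pos h0, if_pos h2]
          exact (G.comm02 x).symm
        · have h0 : G.s0 x ∉ A := fun hc => hx (by rw [← G.inv0 x]; exact (h.2 _ hc).1)
          have h2 : G.s2 x ∉ A := fun hc => hx (by rw [← G.inv2 x]; exact (h.2 _ hc).2)
          simp only [mixFun, if_neg hx, if_neg h0, if_neg h2]
          exact G.comm02 x }
  else G

/-- The geometric dual `G*`: the roles of `s0` and `s2` (vertices and faces)
are interchanged everywhere. -/
def gdual (G : RibbonGraph F) : RibbonGraph F where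
  flags := G.flags
  fverts := G.fverts
  disj := G.disj
  s0 := G.s2
  s1 := G.s1
  s2 := G.s0
  fix0 := G.fix2
  fix1 := G.fix1
  fix2 := G.fix0
  inv0 := G.inv2
  inv1 := G.inv1
  inv2 := G.inv0
  comm02 := fun x => (G.comm02 x).symm

/-- First return map: the first point of the forward `p`-orbit of `x`
lying in `A` (junk value `x` if there is none). -/
noncomputable def ret (p : Equiv.Perm F) (A : Finset F) (x : F) : F := by
  classical
  exact if h : ∃ k : ℕ, (p ^ k) x ∈ A then (p ^ (Nat.find h)) x else x

/-- The corner pairing of the subgraph induced by the edges of `A`: travel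
around the vertex, skipping flags of deleted edges. -/
noncomputable def indS1fun (G : RibbonGraph F) (A : Finset F) : F → F :=
  fun x => if x ∈ A then ret (G.s1 * G.s2) A (G.s1 x) else x

noncomputable def indS1 (G : RibbonGraph F) (A : Finset F) : Equiv.Perm F :=
  if h : Function.Involutive (indS1fun G A) then Function.Involutive.toPerm _ h else 1

lemma indS1_apply {G : RibbonGraph F} {A : Finset F}
    (h : Function.Involutive (indS1fun G A)) (x : F) :
    indS1 G A x = indS1fun G A x := by
  simp only [indS1, dif_pos h]
  rfl

lemma indS1_apply_junk {G : RibbonGraph F} {A : Finset F}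
    (h : ¬ Function.Involutive (indS1fun G A)) (x : F) :
    indS1 G A x = x := by
  simp only [indS1, dif_neg h]
  rfl

/-- The ribbon subgraph `G|_A` induced by the edge subset `A`: its flags are
those of the edges of `A`, and its vertices are the vertices of `G` incident
with `A`.  (Junk value `G` if `A` is not a union of edges.) -/
noncomputable def induce (G : RibbonGraph F) (A : Finset F) : RibbonGraph F :=
  if h : G.IsEdgeSubset A then
    have h0 : Function.Involutive (mixFun 1 G.s0 A) :=
      involutive_mixFun (fun _ => rfl) G.inv0 (fun x hx => ⟨by simpa using hx, (h.2 x hx).1⟩)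
    have h2 : Function.Involutive (mixFun 1 G.s2 A) :=
      involutive_mixFun (fun _ => rfl) G.inv2 (fun x hx => ⟨by simpa using hx, (h.2 x hx).2⟩)
    { flags := A
      fverts := ∅
      disj := by simp
      s0 := mix 1 G.s0 A
      s1 := indS1 G A
      s2 := mix 1 G.s2 A
      fix0 := by
        intro x hx
        rw [mix_apply h0]
        simp only [mixFun, if_neg hx]
        rfl
      fix1 := by
        intro x hx
        by_cases h' : Function.Involutive (indS1fun G A)
        · rw [indS1_apply h']
          simp only [indS1fun, if_neg hx]
        · exact indS1_apply_junk h' x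
      fix2 := by
        intro x hx
        rw [mix_apply h2]
        simp only [mixFun, if_neg hx]
        rfl
      inv0 := by
        intro x
        rw [mix_apply h0, mix_apply h0]
        exact h0 x
      inv1 := by
        intro x
        by_cases h' : Function.Involutive (indS1fun G A)
        · rw [indS1_apply h', indS1_apply h']
          exact h' x
        · rw [indS1_apply_junk h', indS1_apply_junk h']
      inv2 := by
        intro x
        rw [mix_apply h2, mix_apply h2]
        exact h2 x
      comm02 := by
        intro x
        simp only [mix_apply h0, mix_apply h2]
        by_cases hx : x ∈ A
        · have m0 : G.s0 x ∈ A := (h.2 x hx).1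
          have m2 : G.s2 x ∈ A := (h.2 x hx).2
          simp only [mixFun, if_pos hx, if_pos m0, if_pos m2]
          exact G.comm02 x
        · simp only [mixFun, if_neg hx, Equiv.Perm.one_apply] }
  else G

/-- Two flags are related if some generator maps one to the other. -/
def permRel (gens : Set (Equiv.Perm F)) (a b : F) : Prop := ∃ g ∈ gens, g a = b

/-- The orbit of `x` under the group generated by `gens`. -/
def orbitOf (gens : Set (Equiv.Perm F)) (x : F) : Set F :=
  {y | Relation.EqvGen (permRel gens) x y}

/-- The number of orbits of the group generated by `gens` meeting `S`. -/
noncomputable def countOrbits (gens : Set (Equiv.Perm F)) (S : Set F) : ℕ :=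
  (orbitOf gens '' S).ncard

/-- The number of vertices: orbits of `⟨s1, s2⟩` on the flags, plus bare vertices. -/
noncomputable def numVertices (G : RibbonGraph F) : ℕ :=
  countOrbits {G.s1, G.s2} ↑G.flags + G.fverts.card

/-- The number of edges: orbits of `⟨s0, s2⟩` on the flags. -/
noncomputable def numEdges (G : RibbonGraph F) : ℕ :=
  countOrbits {G.s0, G.s2} ↑G.flags

/-- The number of boundary components: orbits of `⟨s0, s1⟩` on the flags,
plus one for each bare vertex. -/
noncomputable def numBoundary (G : RibbonGraph F) : ℕ :=
  countOrbits {G.s0, G.s1} ↑G.flags + G.fverts.card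

/-- The number of connected components. -/
noncomputable def numComponents (G : RibbonGraph F) : ℕ :=
  countOrbits {G.s0, G.s1, G.s2} ↑G.flags + G.fverts.card

/-- The Euler characteristic `χ(G) = V - E` of the ribbon graph viewed as a
surface with boundary. -/
noncomputable def eulerChar (G : RibbonGraph F) : ℤ :=
  (G.numVertices : ℤ) - (G.numEdges : ℤ)

/-- The Euler genus `γ(G) = 2c(G) - χ(G) - b(G)`, additive over components. -/
noncomputable def eulerGenus (G : RibbonGraph F) : ℤ :=
  2 * (G.numComponents : ℤ) - G.eulerChar - (G.numBoundary : ℤ)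

def Connected (G : RibbonGraph F) : Prop := G.numComponents = 1

/-- `G` is orientable iff its flags admit a proper 2-colouring with respect to
all three involutions. -/
def Orientable (G : RibbonGraph F) : Prop :=
  ∃ f : F → Bool, ∀ x ∈ G.flags,
    f (G.s0 x) ≠ f x ∧ f (G.s1 x) ≠ f x ∧ f (G.s2 x) ≠ f x

/-- A plane ribbon graph: connected with Euler genus `0`. -/
def IsPlane (G : RibbonGraph F) : Prop := G.Connected ∧ G.eulerGenus = 0

/-- An `ℝP²` ribbon graph: connected, non-orientable, Euler genus `1`. -/
def IsRP2 (G : RibbonGraph F) : Prop :=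
  G.Connected ∧ ¬ G.Orientable ∧ G.eulerGenus = 1

noncomputable def toFin (s : Set F) : Finset F := (Set.toFinite s).toFinset

/-- The connected component of `G` containing the flag `x`, as a ribbon graph. -/
noncomputable def componentOf (G : RibbonGraph F) (x : F) : RibbonGraph F :=
  G.induce (toFin (orbitOf {G.s0, G.s1, G.s2} x))

/-- The vertex of `G` containing the flag `x`, as a set of flags. -/
def vertexOrbit (G : RibbonGraph F) (x : F) : Set F := orbitOf {G.s1, G.s2} x

def IsVertexOrbit (G : RibbonGraph F) (v : Set F) : Prop :=
  ∃ x ∈ G.flags, v = G.vertexOrbit x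

/-- `v` is a vertex of `G`: either a `⟨s1,s2⟩`-orbit of flags or a bare vertex. -/
def IsVertex (G : RibbonGraph F) (v : Set F) : Prop :=
  G.IsVertexOrbit v ∨ ∃ t ∈ G.fverts, v = {t}

/-- The vertices of `G` shared by the subgraphs `P` and `Q`. -/
def sharedVerts (G P Q : RibbonGraph F) : Set (Set F) :=
  {v | G.IsVertexOrbit v ∧ (v ∩ ↑P.flags).Nonempty ∧ (v ∩ ↑Q.flags).Nonempty}

/-- `H` is the ribbon subgraph of `G` induced by its edges. -/
def IsRibbonSubgraph (H G : RibbonGraph F) : Prop :=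
  G.IsEdgeSubset H.flags ∧ H = G.induce H.flags

/-- `G = P ⊕ₙ Q` is an `n`-sum: `P` and `Q` are non-trivial connected ribbon
subgraphs with `G = P ∪ Q`, sharing no edges and exactly `n` vertices. -/
def IsNSum (G P Q : RibbonGraph F) (n : ℕ) : Prop :=
  P.IsRibbonSubgraph G ∧ Q.IsRibbonSubgraph G ∧
  P.Connected ∧ Q.Connected ∧ P.flags.Nonempty ∧ Q.flags.Nonempty ∧
  P.flags ∪ Q.flags = G.flags ∧ P.flags ∩ Q.flags = ∅ ∧
  (G.sharedVerts P Q).ncard = n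

/-- `H` is a connected component of `G|_A`. -/
def SideA (G : RibbonGraph F) (A : Finset F) (H : RibbonGraph F) : Prop :=
  ∃ x ∈ A, H = (G.induce A).componentOf x

/-- `H` is a connected component of `G|_{Aᶜ}`. -/
def SideB (G : RibbonGraph F) (A : Finset F) (H : RibbonGraph F) : Prop :=
  SideA G (G.flags \ A) H

/-- `G` is written as the sequence of 1-sums `H 0 ⊕ H 1 ⊕ ⋯ ⊕ H (l-1)`
(partial sums `S`), where the summands are the components of `G|_A` and
`G|_{Aᶜ}`, every flag of `G` is covered, and each 1-sum involves a component
of `G|_A` and a component of `G|_{Aᶜ}`. -/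
def BisepSeq (G : RibbonGraph F) (A : Finset F) (l : ℕ)
    (H S : ℕ → RibbonGraph F) : Prop :=
  0 < l ∧ S 0 = H 0 ∧ S (l - 1) = G ∧
  (∀ i < l, SideA G A (H i) ∨ SideB G A (H i)) ∧
  (∀ x ∈ G.flags, ∃ i < l, x ∈ (H i).flags) ∧
  ∀ i, i + 1 < l →
    IsNSum (S (i + 1)) (S i) (H (i + 1)) 1 ∧
    ∃ j ≤ i, ((SideA G A (H (i + 1)) ∧ SideB G A (H j)) ∨
              (SideB G A (H (i + 1)) ∧ SideA G A (H j))) ∧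
      G.sharedVerts (S i) (H (i + 1)) = G.sharedVerts (H j) (H (i + 1))

/-- `A` defines a biseparation of `G` (Definition 3.2): `A` is trivial, or `G`
is a sequence of 1-sums each involving a component of `G|_A` and one of
`G|_{Aᶜ}`. -/
def DefinesBiseparation (G : RibbonGraph F) (A : Finset F) : Prop :=
  A = G.flags ∨ A = ∅ ∨ ∃ l H S, BisepSeq G A l H S

/-- The component of `G|_A` or of `G|_{Aᶜ}` containing the flag `x`. -/
noncomputable def sideComp (G : RibbonGraph F) (A : Finset F) (x : F) : RibbonGraph F :=
  if x ∈ A then (G.induce A).componentOf x else (G.induce (G.flags \ A)).componentOf x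

/-- `A` defines a plane-biseparation: a biseparation in which every component
of `G|_A` and of `G|_{Aᶜ}` is plane. -/
def PlaneBiseparation (G : RibbonGraph F) (A : Finset F) : Prop :=
  G.DefinesBiseparation A ∧ ∀ x ∈ G.flags, (G.sideComp A x).IsPlane

/-- `A` defines an `ℝP²`-biseparation: a biseparation in which exactly one
component of `G|_A` or of `G|_{Aᶜ}` is an `ℝP²` ribbon graph and all other
components are plane. -/
def RP2Biseparation (G : RibbonGraph F) (A : Finset F) : Prop :=
  G.DefinesBiseparation A ∧
  (∃ x ∈ G.flags, (G.sideComp A x).IsRP2 ∧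
    ∀ y ∈ G.flags, (G.sideComp A y).IsRP2 → G.sideComp A y = G.sideComp A x) ∧
  ∀ y ∈ G.flags, ¬ (G.sideComp A y).IsRP2 → (G.sideComp A y).IsPlane

/-- `G = P ∨ Q` is a join: a 1-sum at a vertex `v` such that the flags of `P`
at `v` form an arc (an interval of the cyclic order around `v`). -/
def IsJoin (G P Q : RibbonGraph F) : Prop :=
  IsNSum G P Q 1 ∧ ∃ v ∈ G.sharedVerts P Q,
    ({x | x ∈ v ∩ ↑P.flags ∧ (G.s2 * G.s1) x ∉ v ∩ ↑P.flags} : Set F).ncard ≤ 1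

/-- `G = H 0 ∨ H 1 ∨ ⋯ ∨ H (l-1)` is a (left-associated) sequence of joins. -/
def JoinSeq (G : RibbonGraph F) (l : ℕ) (H : ℕ → RibbonGraph F) : Prop :=
  0 < l ∧ ∃ S : ℕ → RibbonGraph F, S 0 = H 0 ∧ S (l - 1) = G ∧
    ∀ i, i + 1 < l → IsJoin (S (i + 1)) (S i) (H (i + 1))

/-- `A` defines a join-biseparation of `G`: `G = H_1 ∨ ⋯ ∨ H_l` with `A` the
union of the edge sets of some of the `H_i`. -/
def JoinBiseparation (G : RibbonGraph F) (A : Finset F) : Prop :=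
  ∃ l H, JoinSeq G l H ∧ ∃ I : Set ℕ,
    (↑A : Set F) = ⋃ i ∈ {j | j < l ∧ j ∈ I}, (((H i).flags : Set F))

/-- A join-biseparation in which every join summand is plane. -/
def PlaneJoinBiseparation (G : RibbonGraph F) (A : Finset F) : Prop :=
  ∃ l H, JoinSeq G l H ∧ (∀ i < l, (H i).IsPlane) ∧ ∃ I : Set ℕ,
    (↑A : Set F) = ⋃ i ∈ {j | j < l ∧ j ∈ I}, (((H i).flags : Set F))

/-- A join-biseparation in which exactly one join summand is `ℝP²`
and all the others are plane. -/
def RP2JoinBiseparation (G : RibbonGraph F) (A : Finset F) : Prop :=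
  ∃ l H, JoinSeq G l H ∧
    (∃ i < l, (H i).IsRP2 ∧ ∀ j < l, j ≠ i → (H j).IsPlane) ∧ ∃ I : Set ℕ,
    (↑A : Set F) = ⋃ i ∈ {j | j < l ∧ j ∈ I}, (((H i).flags : Set F))

/-- `G` is prime: it is not a join of two (non-trivial) ribbon graphs. -/
def IsPrime (G : RibbonGraph F) : Prop := ¬ ∃ P Q : RibbonGraph F, IsJoin G P Q

/-- `H` is a join-summand of `G`. -/
def IsJoinSummand (G H : RibbonGraph F) : Prop :=
  ∃ l Hs, JoinSeq G l Hs ∧ ∃ i < l, Hs i = H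

/-- `B` is obtained from `A` by toggling a join-summand of `G`, i.e. by taking
the symmetric difference with the edge set of a join-summand. -/
def ToggleStep (G : RibbonGraph F) (A B : Finset F) : Prop :=
  ∃ H, G.IsJoinSummand H ∧ B = symmDiff A H.flags

/-- The disjoint union of two ribbon graphs on disjoint supports.
(Junk value `P` if the supports are not disjoint.) -/
noncomputable def disjUnion (P Q : RibbonGraph F) : RibbonGraph F :=
  if h : Disjoint (P.flags ∪ P.fverts) (Q.flags ∪ Q.fverts) then
    have hPQ : ∀ x ∈ P.flags, x ∉ Q.flags := fun x hx hc =>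
      (Finset.disjoint_left.mp h (Finset.mem_union_left _ hx)) (Finset.mem_union_left _ hc)
    have key : ∀ (p q : Equiv.Perm F), (∀ x ∉ P.flags, p x = x) → (∀ x, p (p x) = x) →
        (∀ x ∉ Q.flags, q x = x) → (∀ x, q (q x) = x) →
        Function.Involutive (mixFun q p P.flags) := fun p q hp hp2 hq hq2 =>
      involutive_mixFun hq2 hp2 (fun x hx =>
        ⟨by rw [hq x (hPQ x hx)]; exact hx, perm_mem_of hp hp2 hx⟩)
    have h0 : Function.Involutive (mixFun Q.s0 P.s0 P.flags) :=
      key P.s0 Q.s0 P.fix0 P.inv0 Q.fix0 Q.inv0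
    have h1 : Function.Involutive (mixFun Q.s1 P.s1 P.flags) :=
      key P.s1 Q.s1 P.fix1 P.inv1 Q.fix1 Q.inv1
    have h2 : Function.Involutive (mixFun Q.s2 P.s2 P.flags) :=
      key P.s2 Q.s2 P.fix2 P.inv2 Q.fix2 Q.inv2
    { flags := P.flags ∪ Q.flags
      fverts := P.fverts ∪ Q.fverts
      disj := by
        intro x hx hc
        rcases Finset.mem_union.mp hx with hxP | hxQ
        · rcases Finset.mem_union.mp hc with hcP | hcQ
          · exact P.disj x hxP hcP
          · exact (Finset.disjoint_left.mp h (Finset.mem_union_right _ hxP))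
              (Finset.mem_union_left _ hcQ)
        · rcases Finset.mem_union.mp hc with hcP | hcQ
          · exact (Finset.disjoint_left.mp h (Finset.mem_union_left _ hcP))
              (Finset.mem_union_right _ hxQ)
          · exact Q.disj x hxQ hcQ
      s0 := mix Q.s0 P.s0 P.flags
      s1 := mix Q.s1 P.s1 P.flags
      s2 := mix Q.s2 P.s2 P.flags
      fix0 := by
        intro x hx
        have hxP : x ∉ P.flags := fun hc => hx (Finset.mem_union_left _ hc)
        have hxQ : x ∉ Q.flags := fun hc => hx (Finset.mem_union_right _ hc)
        rw [mix_apply h0]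
        simp only [mixFun, if_neg hxP]
        exact Q.fix0 x hxQ
      fix1 := by
        intro x hx
        have hxP : x ∉ P.flags := fun hc => hx (Finset.mem_union_left _ hc)
        have hxQ : x ∉ Q.flags := fun hc => hx (Finset.mem_union_right _ hc)
        rw [mix_apply h1]
        simp only [mixFun, if_neg hxP]
        exact Q.fix1 x hxQ
      fix2 := by
        intro x hx
        have hxP : x ∉ P.flags := fun hc => hx (Finset.mem_union_left _ hc)
        have hxQ : x ∉ Q.flags := fun hc => hx (Finset.mem_union_right _ hc)
        rw [mix_apply h2]
        simp only [mixFun, if_neg hxP]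
        exact Q.fix2 x hxQ
      inv0 := by
        intro x
        rw [mix_apply h0, mix_apply h0]
        exact h0 x
      inv1 := by
        intro x
        rw [mix_apply h1, mix_apply h1]
        exact h1 x
      inv2 := by
        intro x
        rw [mix_apply h2, mix_apply h2]
        exact h2 x
      comm02 := by
        intro x
        simp only [mix_apply h0, mix_apply h2]
        by_cases hx : x ∈ P.flags
        · have m2 : P.s2 x ∈ P.flags := perm_mem_of P.fix2 P.inv2 hx
          have m0 : P.s0 x ∈ P.flags := perm_mem_of P.fix0 P.inv0 hx
          simp only [mixFun, if_pos hx, if_pos m2, if_pos m0]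
          exact P.comm02 x
        · have m2 : Q.s2 x ∉ P.flags := by
            by_cases hq : x ∈ Q.flags
            · intro hc
              exact hPQ _ hc (perm_mem_of Q.fix2 Q.inv2 hq)
            · rw [Q.fix2 x hq]; exact hx
          have m0 : Q.s0 x ∉ P.flags := by
            by_cases hq : x ∈ Q.flags
            · intro hc
              exact hPQ _ hc (perm_mem_of Q.fix0 Q.inv0 hq)
            · rw [Q.fix0 x hq]; exact hx
          simp only [mixFun, if_neg hx, if_neg m2, if_neg m0]
          exact Q.comm02 x }
  else P

/-- `G` is orientable if and only if `G^A` is orientable,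
for every `A ⊆ E(G)`. -/
theorem orientable_iff_partialDual_orientable (G : RibbonGraph F) :
    ∀ A : Finset F, G.IsEdgeSubset A → (G.Orientable ↔ (G.partialDual A).Orientable) := by
  intro A hA
  have h02 : Function.Involutive (mixFun G.s0 G.s2 A) :=
    involutive_mixFun G.inv0 G.inv2 hA.2
  have h20 : Function.Involutive (mixFun G.s2 G.s0 A) :=
    involutive_mixFun G.inv2 G.inv0 (fun x hx => ⟨(hA.2 x hx).2, (hA.2 x hx).1⟩)
  have hfl : (G.partialDual A).flags = G.flags := by
    simp only [partialDual, dif_pos hA]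
  have hs1 : (G.partialDual A).s1 = G.s1 := by
    simp only [partialDual, dif_pos hA]
  have hs0 : ∀ x, (G.partialDual A).s0 x = if x ∈ A then G.s2 x else G.s0 x := by
    intro x
    simp only [partialDual, dif_pos hA]
    rw [mix_apply h02]; rfl
  have hs2 : ∀ x, (G.partialDual A).s2 x = if x ∈ A then G.s0 x else G.s2 x := by
    intro x
    simp only [partialDual, dif_pos hA]
    rw [mix_apply h20]; rfl
  constructor
  · rintro ⟨f, hf⟩
    refine ⟨f, fun x hx => ?_⟩
    rw [hfl] at hx
    obtain ⟨h0, h1, h2⟩ := hf x hx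
    rw [hs0, hs2, hs1]
    by_cases hxA : x ∈ A <;> simp [hxA, h0, h1, h2]
  · rintro ⟨f, hf⟩
    refine ⟨f, fun x hx => ?_⟩
    obtain ⟨h0, h1, h2⟩ := hf x (hfl ▸ hx)
    rw [hs0 x, hs2 x, hs1] at *
    by_cases hxA : x ∈ A <;> simp [hxA] at h0 h2 <;> exact ⟨by assumption, h1, by assumption⟩

end RibbonGraph

end RibbonPaper
end

section
/- Let G = P ⊕_{n_1} Q ⊕_{n_2} R with P ∩ R = ∅ and A ⊆ E(P). Then G^A = (P ⊕_{n_1} Q)^A ⊕_{n_2} R. -/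
/-!
A combinatorial model of ribbon graphs (cellularly embedded graphs), following
the flag / three-involution (graph-encoded map) presentation.  A ribbon graph
consists of a finite set of flags `flags` inside an ambient type `F`, a finite
set `fverts` of tokens representing isolated (bare) vertices, and three
involutions `s0, s1, s2` of `F` supported on `flags`, with `s0` and `s2`
commuting.  Vertices correspond to orbits of `⟨s1, s2⟩` on flags (plus the bare
vertices), edges to orbits of `⟨s0, s2⟩`, and boundary components to orbits of
`⟨s0, s1⟩`.  Chmutov's partial dual with respect to an edge subset `A` swaps
the roles of `s0` and `s2` on the flags of `A`.
-/

namespace RibbonPaper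

open Function

variable {F : Type*} [DecidableEq F] [Fintype F]

namespace RibbonGraph

attribute [local instance] Classical.propDecidable

/-! ### Auxiliary lemmas for Statement 7 -/

lemma rg_ext {G H : RibbonGraph F} (h1 : G.flags = H.flags) (h2 : G.fverts = H.fverts)
    (h3 : G.s0 = H.s0) (h4 : G.s1 = H.s1) (h5 : G.s2 = H.s2) : G = H := by
  cases G; cases H; simp_all

lemma partialDual_flags {G : RibbonGraph F} {A : Finset F} (h : G.IsEdgeSubset A) :
    (G.partialDual A).flags = G.flags := by
  unfold partialDual; rw [dif_pos h]

lemma partialDual_fverts {G : RibbonGraph F} {A : Finset F} (h : G.IsEdgeSubset A) :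
    (G.partialDual A).fverts = G.fverts := by
  unfold partialDual; rw [dif_pos h]

lemma partialDual_s1 {G : RibbonGraph F} {A : Finset F} (h : G.IsEdgeSubset A) :
    (G.partialDual A).s1 = G.s1 := by
  unfold partialDual; rw [dif_pos h]

lemma partialDual_s0_apply {G : RibbonGraph F} {A : Finset F} (h : G.IsEdgeSubset A) (x : F) :
    (G.partialDual A).s0 x = if x ∈ A then G.s2 x else G.s0 x := by
  have h02 : Function.Involutive (mixFun G.s0 G.s2 A) := involutive_mixFun G.inv0 G.inv2 h.2
  unfold partialDual; rw [dif_pos h]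
  show mix G.s0 G.s2 A x = _
  rw [mix_apply h02]; rfl

lemma partialDual_s2_apply {G : RibbonGraph F} {A : Finset F} (h : G.IsEdgeSubset A) (x : F) :
    (G.partialDual A).s2 x = if x ∈ A then G.s0 x else G.s2 x := by
  have h20 : Function.Involutive (mixFun G.s2 G.s0 A) :=
    involutive_mixFun G.inv2 G.inv0 (fun x hx => ⟨(h.2 x hx).2, (h.2 x hx).1⟩)
  unfold partialDual; rw [dif_pos h]
  show mix G.s2 G.s0 A x = _
  rw [mix_apply h20]; rfl

lemma induce_flags {G : RibbonGraph F} {B : Finset F} (h : G.IsEdgeSubset B) :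
    (G.induce B).flags = B := by
  unfold induce; rw [dif_pos h]

lemma induce_fverts {G : RibbonGraph F} {B : Finset F} (h : G.IsEdgeSubset B) :
    (G.induce B).fverts = ∅ := by
  unfold induce; rw [dif_pos h]

lemma induce_s1 {G : RibbonGraph F} {B : Finset F} (h : G.IsEdgeSubset B) :
    (G.induce B).s1 = indS1 G B := by
  unfold induce; rw [dif_pos h]

lemma induce_s0_apply {G : RibbonGraph F} {B : Finset F} (h : G.IsEdgeSubset B) (x : F) :
    (G.induce B).s0 x = if x ∈ B then G.s0 x else x := by
  have h0 : Function.Involutive (mixFun 1 G.s0 B) :=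
    involutive_mixFun (fun _ => rfl) G.inv0 (fun x hx => ⟨by simpa using hx, (h.2 x hx).1⟩)
  unfold induce; rw [dif_pos h]
  show mix 1 G.s0 B x = _
  rw [mix_apply h0]
  unfold mixFun
  split <;> rfl

lemma induce_s2_apply {G : RibbonGraph F} {B : Finset F} (h : G.IsEdgeSubset B) (x : F) :
    (G.induce B).s2 x = if x ∈ B then G.s2 x else x := by
  have h2 : Function.Involutive (mixFun 1 G.s2 B) :=
    involutive_mixFun (fun _ => rfl) G.inv2 (fun x hx => ⟨by simpa using hx, (h.2 x hx).2⟩)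
  unfold induce; rw [dif_pos h]
  show mix 1 G.s2 B x = _
  rw [mix_apply h2]
  unfold mixFun
  split <;> rfl

lemma sub_s0_apply {H G : RibbonGraph F} (hs : H.IsRibbonSubgraph G) {x : F}
    (hx : x ∈ H.flags) : H.s0 x = G.s0 x := by
  conv_lhs => rw [hs.2]
  rw [induce_s0_apply hs.1, if_pos hx]

lemma sub_s2_apply {H G : RibbonGraph F} (hs : H.IsRibbonSubgraph G) {x : F}
    (hx : x ∈ H.flags) : H.s2 x = G.s2 x := by
  conv_lhs => rw [hs.2]
  rw [induce_s2_apply hs.1, if_pos hx]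

lemma sub_s1 {H G : RibbonGraph F} (hs : H.IsRibbonSubgraph G) :
    H.s1 = indS1 G H.flags := by
  conv_lhs => rw [hs.2]
  rw [induce_s1 hs.1]

lemma sub_fverts {H G : RibbonGraph F} (hs : H.IsRibbonSubgraph G) : H.fverts = ∅ := by
  conv_lhs => rw [hs.2]
  rw [induce_fverts hs.1]

lemma edge_trans {H G : RibbonGraph F} {A : Finset F} (hs : H.IsRibbonSubgraph G)
    (hA : H.IsEdgeSubset A) : G.IsEdgeSubset A := by
  refine ⟨hA.1.trans hs.1.1, fun x hx => ?_⟩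
  rw [← sub_s0_apply hs (hA.1 hx), ← sub_s2_apply hs (hA.1 hx)]
  exact hA.2 x hx

lemma pow_agree {p p' : Equiv.Perm F} {A' : Finset F} {x : F}
    (hag : ∀ k, (∀ j ≤ k, (p ^ j) x ∉ A') → p' ((p ^ k) x) = p ((p ^ k) x)) :
    ∀ k, (∀ j < k, (p ^ j) x ∉ A') → (p' ^ k) x = (p ^ k) x := by
  intro k
  induction k with
  | zero => intro _; rfl
  | succ k ih =>
    intro h
    have hk := ih (fun j hj => h j (Nat.lt_succ_of_lt hj))
    rw [pow_succ', pow_succ', Equiv.Perm.mul_apply, Equiv.Perm.mul_apply, hk,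
      hag k (fun j hj => h j (Nat.lt_succ_of_le hj))]

lemma ret_congr {p p' : Equiv.Perm F} {A' : Finset F} {x : F}
    (hag : ∀ k, (∀ j ≤ k, (p ^ j) x ∉ A') → p' ((p ^ k) x) = p ((p ^ k) x)) :
    ret p A' x = ret p' A' x := by
  by_cases hex : ∃ k : ℕ, (p ^ k) x ∈ A'
  · have hmin : ∀ j < Nat.find hex, (p ^ j) x ∉ A' := fun j hj => Nat.find_min hex hj
    have hcl : ∀ j ≤ Nat.find hex, (p' ^ j) x = (p ^ j) x := fun j hj =>
      pow_agree hag j (fun i hi => hmin i (lt_of_lt_of_le hi hj))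
    have hex' : ∃ k : ℕ, (p' ^ k) x ∈ A' :=
      ⟨Nat.find hex, by rw [hcl _ le_rfl]; exact Nat.find_spec hex⟩
    have hfind : Nat.find hex' = Nat.find hex := by
      refine le_antisymm (Nat.find_le (by rw [hcl _ le_rfl]; exact Nat.find_spec hex))
        (le_of_not_gt fun hlt => ?_)
      have hsp := Nat.find_spec hex'
      rw [hcl _ (le_of_lt hlt)] at hsp
      exact hmin _ hlt hsp
    unfold ret
    rw [dif_pos hex, dif_pos hex', hfind, hcl _ le_rfl]
  · have hall : ∀ k, (p ^ k) x ∉ A' := fun k hk => hex ⟨k, hk⟩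
    have hcl : ∀ k, (p' ^ k) x = (p ^ k) x := fun k => pow_agree hag k (fun j _ => hall j)
    have hex' : ¬∃ k : ℕ, (p' ^ k) x ∈ A' := by
      rintro ⟨k, hk⟩
      rw [hcl k] at hk
      exact hall k hk
    unfold ret
    rw [dif_neg hex, dif_neg hex']

lemma indS1_congr {G G' : RibbonGraph F} {B : Finset F}
    (h : indS1fun G B = indS1fun G' B) : indS1 G B = indS1 G' B := by
  unfold indS1; rw [h]

lemma mem_orbit_self (gens : Set (Equiv.Perm F)) (x : F) : x ∈ orbitOf gens x :=
  Relation.EqvGen.refl x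

lemma orbit_apply_mem {gens : Set (Equiv.Perm F)} {g : Equiv.Perm F} (hg : g ∈ gens)
    {x y : F} (hy : y ∈ orbitOf gens x) : g y ∈ orbitOf gens x :=
  Relation.EqvGen.trans _ _ _ hy (Relation.EqvGen.rel _ _ ⟨g, hg, rfl⟩)

lemma orbit_eq_of_mem {gens : Set (Equiv.Perm F)} {x y : F} (hy : y ∈ orbitOf gens x) :
    orbitOf gens x = orbitOf gens y := by
  ext z
  exact ⟨fun hz => Relation.EqvGen.trans _ _ _ (Relation.EqvGen.symm _ _ hy) hz,
    fun hz => Relation.EqvGen.trans _ _ _ hy hz⟩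

lemma eqvgen_mem_iff {gens : Set (Equiv.Perm F)} {S : Set F}
    (hS : ∀ g ∈ gens, ∀ y : F, g y ∈ S ↔ y ∈ S) {a b : F}
    (h : Relation.EqvGen (permRel gens) a b) : a ∈ S ↔ b ∈ S := by
  induction h with
  | rel a b hab => obtain ⟨g, hg, rfl⟩ := hab; exact (hS g hg a).symm
  | refl a => exact Iff.rfl
  | symm a b _ ih => exact ih.symm
  | trans a b c _ _ ih1 ih2 => exact ih1.trans ih2

lemma orbit_subset_of_closed {gens : Set (Equiv.Perm F)} {S : Set F}
    (hS : ∀ g ∈ gens, ∀ y : F, g y ∈ S ↔ y ∈ S) {x : F} (hx : x ∈ S) :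
    orbitOf gens x ⊆ S := fun _ hz => (eqvgen_mem_iff hS hz).mp hx

lemma orbit_pd_eq {G : RibbonGraph F} {A : Finset F} (h : G.IsEdgeSubset A) {x : F}
    (hx : ∀ z ∈ orbitOf {G.s1, G.s2} x, z ∉ A) :
    orbitOf {(G.partialDual A).s1, (G.partialDual A).s2} x = orbitOf {G.s1, G.s2} x := by
  have hmem1 : G.s1 ∈ ({G.s1, G.s2} : Set (Equiv.Perm F)) := Set.mem_insert _ _
  have hmem2 : G.s2 ∈ ({G.s1, G.s2} : Set (Equiv.Perm F)) := Set.mem_insert_of_mem _ rfl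
  have hsub : orbitOf {(G.partialDual A).s1, (G.partialDual A).s2} x ⊆ orbitOf {G.s1, G.s2} x := by
    apply orbit_subset_of_closed _ (mem_orbit_self _ _)
    intro g hg y
    rcases hg with hg | hg
    · subst hg
      rw [partialDual_s1 h]
      constructor
      · intro hy
        have := orbit_apply_mem hmem1 hy
        rwa [G.inv1 y] at this
      · exact orbit_apply_mem hmem1
    · rw [Set.mem_singleton_iff] at hg
      subst hg
      constructor
      · intro hy
        have hw : (G.partialDual A).s2 y ∉ A := hx _ hy
        have h1 : G.s2 ((G.partialDual A).s2 y) = y := by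
          rw [((partialDual_s2_apply h ((G.partialDual A).s2 y)).trans (if_neg hw)).symm]
          exact (G.partialDual A).inv2 y
        have := orbit_apply_mem hmem2 hy
        rwa [h1] at this
      · intro hy
        have hyA : y ∉ A := hx _ hy
        rw [partialDual_s2_apply h, if_neg hyA]
        exact orbit_apply_mem hmem2 hy
  refine Set.Subset.antisymm hsub ?_
  apply orbit_subset_of_closed _ (mem_orbit_self _ _)
  intro g hg y
  have hm1' : (G.partialDual A).s1 ∈
      ({(G.partialDual A).s1, (G.partialDual A).s2} : Set (Equiv.Perm F)) := Set.mem_insert _ _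
  have hm2' : (G.partialDual A).s2 ∈
      ({(G.partialDual A).s1, (G.partialDual A).s2} : Set (Equiv.Perm F)) :=
    Set.mem_insert_of_mem _ rfl
  rcases hg with hg | hg
  · subst hg
    constructor
    · intro hy
      have heq : (G.partialDual A).s1 (G.s1 y) = y := by
        rw [partialDual_s1 h]; exact G.inv1 y
      have := orbit_apply_mem hm1' hy
      rwa [heq] at this
    · intro hy
      have heq : (G.partialDual A).s1 y = G.s1 y := by rw [partialDual_s1 h]
      have := orbit_apply_mem hm1' hy
      rwa [heq] at this
  · rw [Set.mem_singleton_iff] at hg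
    subst hg
    constructor
    · intro hy
      have hwA : G.s2 y ∉ A := hx _ (hsub hy)
      have := orbit_apply_mem hm2' hy
      rw [partialDual_s2_apply h, if_neg hwA, G.inv2 y] at this
      exact this
    · intro hy
      have hyA : y ∉ A := hx _ (hsub hy)
      have := orbit_apply_mem hm2' hy
      rwa [partialDual_s2_apply h, if_neg hyA] at this

lemma permRel_pd {G : RibbonGraph F} {A : Finset F} (h : G.IsEdgeSubset A) :
    permRel {(G.partialDual A).s0, (G.partialDual A).s1, (G.partialDual A).s2} =
      permRel {G.s0, G.s1, G.s2} := by
  funext a b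
  apply propext
  constructor
  · rintro ⟨g, hg, rfl⟩
    rcases hg with hg | hg | hg
    · subst hg
      rw [partialDual_s0_apply h]
      by_cases ha : a ∈ A
      · exact ⟨G.s2, by simp, by rw [if_pos ha]⟩
      · exact ⟨G.s0, by simp, by rw [if_neg ha]⟩
    · subst hg
      exact ⟨G.s1, by simp, by rw [partialDual_s1 h]⟩
    · rw [Set.mem_singleton_iff] at hg
      subst hg
      rw [partialDual_s2_apply h]
      by_cases ha : a ∈ A
      · exact ⟨G.s0, by simp, by rw [if_pos ha]⟩
      · exact ⟨G.s2, by simp, by rw [if_neg ha]⟩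
  · rintro ⟨g, hg, rfl⟩
    rcases hg with hg | hg | hg
    · subst hg
      by_cases ha : a ∈ A
      · exact ⟨(G.partialDual A).s2, by simp, by rw [partialDual_s2_apply h, if_pos ha]⟩
      · exact ⟨(G.partialDual A).s0, by simp, by rw [partialDual_s0_apply h, if_neg ha]⟩
    · subst hg
      exact ⟨(G.partialDual A).s1, by simp, by rw [partialDual_s1 h]⟩
    · rw [Set.mem_singleton_iff] at hg
      subst hg
      by_cases ha : a ∈ A
      · exact ⟨(G.partialDual A).s0, by simp, by rw [partialDual_s0_apply h, if_pos ha]⟩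
      · exact ⟨(G.partialDual A).s2, by simp, by rw [partialDual_s2_apply h, if_neg ha]⟩

lemma numComponents_partialDual {G : RibbonGraph F} {A : Finset F} (h : G.IsEdgeSubset A) :
    (G.partialDual A).numComponents = G.numComponents := by
  unfold numComponents countOrbits orbitOf
  rw [permRel_pd h, partialDual_flags h, partialDual_fverts h]

/-- If `G = P ⊕_{n₁} Q ⊕_{n₂} R` (left-associated), with
`P ∩ R = ∅` and `A ⊆ E(P)`, then `G^A = (P ⊕_{n₁} Q)^A ⊕_{n₂} R`. -/
theorem partialDual_nsum_of_disjoint (G PQ P Q R : RibbonGraph F) (n₁ n₂ : ℕ)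
    (h₁ : IsNSum PQ P Q n₁) (h₂ : IsNSum G PQ R n₂)
    (hflags : P.flags ∩ R.flags = ∅) (hverts : G.sharedVerts P R = ∅)
    (A : Finset F) (hA : P.IsEdgeSubset A) :
    IsNSum (G.partialDual A) (PQ.partialDual A) R n₂ := by
  obtain ⟨hPsub, hQsub, hPcon, hQcon, hPne, hQne, hPQun, hPQint, hn1⟩ := h₁
  obtain ⟨hPQsub, hRsub, hPQcon, hRcon, hPQne, hRne, hGun, hGint, hn2⟩ := h₂
  have hAPQ : PQ.IsEdgeSubset A := edge_trans hPsub hA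
  have hAG : G.IsEdgeSubset A := edge_trans hPQsub hAPQ
  have hRnotA : ∀ x ∈ R.flags, x ∉ A := by
    intro x hx hc
    have : x ∈ P.flags ∩ R.flags := Finset.mem_inter.mpr ⟨hA.1 hc, hx⟩
    rw [hflags] at this
    exact absurd this (Finset.notMem_empty x)
  have horb : ∀ x ∈ R.flags, ∀ z ∈ orbitOf {G.s1, G.s2} x, z ∉ A := by
    intro x hx z hz hzA
    have hmem : G.vertexOrbit x ∈ G.sharedVerts P R :=
      ⟨⟨x, hRsub.1.1 hx, rfl⟩, ⟨z, hz, Finset.mem_coe.mpr (hA.1 hzA)⟩,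
        ⟨x, mem_orbit_self _ _, Finset.mem_coe.mpr hx⟩⟩
    rw [hverts] at hmem
    exact hmem
  have hPQA1 : (G.partialDual A).IsEdgeSubset PQ.flags := by
    refine ⟨?_, fun x hx => ?_⟩
    · rw [partialDual_flags hAG]; exact hPQsub.1.1
    · obtain ⟨h0, h2⟩ := hPQsub.1.2 x hx
      rw [partialDual_s0_apply hAG, partialDual_s2_apply hAG]
      constructor <;> split <;> assumption
  have hRA1 : (G.partialDual A).IsEdgeSubset R.flags := by
    refine ⟨?_, fun x hx => ?_⟩
    · rw [partialDual_flags hAG]; exact hRsub.1.1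
    · obtain ⟨h0, h2⟩ := hRsub.1.2 x hx
      rw [partialDual_s0_apply hAG, partialDual_s2_apply hAG]
      constructor <;> split <;> assumption
  -- PQ^A is the induced subgraph of G^A on PQ.flags
  have hPQeq : PQ.partialDual A = (G.partialDual A).induce PQ.flags := by
    apply rg_ext
    · rw [partialDual_flags hAPQ, induce_flags hPQA1]
    · rw [partialDual_fverts hAPQ, induce_fverts hPQA1]
      exact sub_fverts hPQsub
    · apply Equiv.ext
      intro x
      rw [partialDual_s0_apply hAPQ, induce_s0_apply hPQA1]
      by_cases hx : x ∈ PQ.flags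
      · rw [if_pos hx, partialDual_s0_apply hAG]
        by_cases hxA : x ∈ A
        · rw [if_pos hxA, if_pos hxA]
          exact sub_s2_apply hPQsub hx
        · rw [if_neg hxA, if_neg hxA]
          exact sub_s0_apply hPQsub hx
      · have hxA : x ∉ A := fun hc => hx (hAPQ.1 hc)
        rw [if_neg hxA, if_neg hx]
        exact PQ.fix0 x hx
    · rw [partialDual_s1 hAPQ, induce_s1 hPQA1, sub_s1 hPQsub]
      apply indS1_congr
      funext x
      unfold indS1fun
      by_cases hx : x ∈ PQ.flags
      · rw [if_pos hx, if_pos hx, partialDual_s1 hAG]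
        apply ret_congr
        intro k hk
        have hnot : ((G.s1 * G.s2) ^ k) (G.s1 x) ∉ A :=
          fun hc => hk k le_rfl (hAPQ.1 hc)
        rw [Equiv.Perm.mul_apply, Equiv.Perm.mul_apply,
          partialDual_s2_apply hAG, if_neg hnot]
      · rw [if_neg hx, if_neg hx]
    · apply Equiv.ext
      intro x
      rw [partialDual_s2_apply hAPQ, induce_s2_apply hPQA1]
      by_cases hx : x ∈ PQ.flags
      · rw [if_pos hx, partialDual_s2_apply hAG]
        by_cases hxA : x ∈ A
        · rw [if_pos hxA, if_pos hxA]
          exact sub_s0_apply hPQsub hx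
        · rw [if_neg hxA, if_neg hxA]
          exact sub_s2_apply hPQsub hx
      · have hxA : x ∉ A := fun hc => hx (hAPQ.1 hc)
        rw [if_neg hxA, if_neg hx]
        exact PQ.fix2 x hx
  -- R is the induced subgraph of G^A on R.flags
  have horbpow : ∀ x ∈ R.flags, ∀ k : ℕ,
      ((G.s1 * G.s2) ^ k) (G.s1 x) ∈ orbitOf {G.s1, G.s2} x := by
    intro x hx k
    have hmem1 : G.s1 ∈ ({G.s1, G.s2} : Set (Equiv.Perm F)) := Set.mem_insert _ _
    have hmem2 : G.s2 ∈ ({G.s1, G.s2} : Set (Equiv.Perm F)) := Set.mem_insert_of_mem _ rfl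
    induction k with
    | zero =>
      simpa using orbit_apply_mem hmem1 (mem_orbit_self _ x)
    | succ k ih =>
      rw [pow_succ', Equiv.Perm.mul_apply, Equiv.Perm.mul_apply]
      exact orbit_apply_mem hmem1 (orbit_apply_mem hmem2 ih)
  have hReq : R = (G.partialDual A).induce R.flags := by
    conv_lhs => rw [hRsub.2]
    apply rg_ext
    · rw [induce_flags hRsub.1, induce_flags hRA1]
    · rw [induce_fverts hRsub.1, induce_fverts hRA1]
    · apply Equiv.ext
      intro x
      rw [induce_s0_apply hRsub.1, induce_s0_apply hRA1]
      by_cases hx : x ∈ R.flags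
      · rw [if_pos hx, if_pos hx, partialDual_s0_apply hAG, if_neg (hRnotA x hx)]
      · rw [if_neg hx, if_neg hx]
    · rw [induce_s1 hRsub.1, induce_s1 hRA1]
      apply indS1_congr
      funext x
      unfold indS1fun
      by_cases hx : x ∈ R.flags
      · rw [if_pos hx, if_pos hx, partialDual_s1 hAG]
        apply ret_congr
        intro k _
        have hnot : ((G.s1 * G.s2) ^ k) (G.s1 x) ∉ A :=
          horb x hx _ (horbpow x hx k)
        rw [Equiv.Perm.mul_apply, Equiv.Perm.mul_apply,
          partialDual_s2_apply hAG, if_neg hnot]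
      · rw [if_neg hx, if_neg hx]
    · apply Equiv.ext
      intro x
      rw [induce_s2_apply hRsub.1, induce_s2_apply hRA1]
      by_cases hx : x ∈ R.flags
      · rw [if_pos hx, if_pos hx, partialDual_s2_apply hAG, if_neg (hRnotA x hx)]
      · rw [if_neg hx, if_neg hx]
  -- shared vertices are unchanged
  have hsv : (G.partialDual A).sharedVerts (PQ.partialDual A) R = G.sharedVerts PQ R := by
    ext v
    simp only [sharedVerts, Set.mem_setOf_eq, IsVertexOrbit, partialDual_flags hAPQ,
      partialDual_flags hAG]
    constructor
    · rintro ⟨⟨x, hxG, rfl⟩, hP, hR⟩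
      obtain ⟨y, hyv, hyR⟩ := hR
      have hyR' : y ∈ R.flags := Finset.mem_coe.mp hyR
      have h1 : (G.partialDual A).vertexOrbit x = (G.partialDual A).vertexOrbit y :=
        orbit_eq_of_mem hyv
      have h2 : (G.partialDual A).vertexOrbit y = G.vertexOrbit y :=
        orbit_pd_eq hAG (horb y hyR')
      refine ⟨⟨y, hRsub.1.1 hyR', h1.trans h2⟩, hP, ⟨y, hyv, hyR⟩⟩
    · rintro ⟨⟨x, hxG, rfl⟩, hP, hR⟩
      obtain ⟨y, hyv, hyR⟩ := hR
      have hyR' : y ∈ R.flags := Finset.mem_coe.mp hyR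
      have h1 : G.vertexOrbit x = G.vertexOrbit y := orbit_eq_of_mem hyv
      have h2 : G.vertexOrbit y = (G.partialDual A).vertexOrbit y :=
        (orbit_pd_eq hAG (horb y hyR')).symm
      refine ⟨⟨y, hRsub.1.1 hyR', h1.trans h2⟩, hP, ⟨y, hyv, hyR⟩⟩
  refine ⟨⟨?_, ?_⟩, ⟨?_, ?_⟩, ?_, hRcon, ?_, hRne, ?_, ?_, ?_⟩
  · rw [partialDual_flags hAPQ]; exact hPQA1
  · rw [partialDual_flags hAPQ]; exact hPQeq
  · exact hRA1
  · exact hReq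
  · show (PQ.partialDual A).Connected
    unfold Connected
    rw [numComponents_partialDual hAPQ]
    exact hPQcon
  · rw [partialDual_flags hAPQ]; exact hPQne
  · rw [partialDual_flags hAPQ, partialDual_flags hAG]; exact hGun
  · rw [partialDual_flags hAPQ]; exact hGint
  · rw [hsv]; exact hn2

end RibbonGraph

end RibbonPaper
end
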